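/- arXiv:2408.04445 — 2 statements merged into one kernel-verified Lean document; each statement's English description precedes it below -/
import Mathlib

section
/- The map φ from Π_n to binary n²×n² matrices, which sends M = [π_{ij}] to the matrix A = [α_{ij}] defined by α_{ij} = 1 if and only if there exist s,t ∈ {0,1,...,n−1} with i = s·n + π_{s,t} − 1 and j = t·n + π_{n+t,s} − 1, is injective: distinct matrices of Π_n are mapped to distinct binary matrices. -/
/-- Row `s` (with `0 ≤ s < n`) of a `(2n) × n` matrix, as an index in `Fin (2n)`. -/
def rowT (n : ℕ) (s : Fin n) : Fin (2 * n) := ⟨s.val, by have := s.isLt; omega⟩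

/-- Row `n + t` (with `0 ≤ t < n`) of a `(2n) × n` matrix, as an index in `Fin (2n)`. -/
def rowB (n : ℕ) (t : Fin n) : Fin (2 * n) := ⟨n + t.val, by have := t.isLt; omega⟩

/-- `Π_n`: every row of the `(2n) × n` matrix is a permutation of `{1,…,n}`. -/
def IsPiMatrix (n : ℕ) (M : Fin (2 * n) → Fin n → ℕ) : Prop :=
  ∀ i : Fin (2 * n), Finset.image (M i) Finset.univ = Finset.Icc 1 n

/-- The map `φ` sending `M = [π_{ij}] ∈ Π_n` to the binary `n² × n²` matrix
`A = [α_{ij}]` with `α_{ij} = 1` iff there exist `s, t ∈ {0,…,n−1}` with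
`i = s·n + π_{s,t} − 1` and `j = t·n + π_{n+t,s} − 1`, and `α_{ij} = 0`
otherwise. -/
def phi (n : ℕ) (M : Fin (2 * n) → Fin n → ℕ) : Fin (n ^ 2) → Fin (n ^ 2) → ℕ :=
  fun i j =>
    if ∃ s t : Fin n, (i : ℕ) = s.val * n + M (rowT n s) t - 1 ∧
        (j : ℕ) = t.val * n + M (rowB n t) s - 1
    then 1 else 0

lemma key_div {n s s' a a' : ℕ} (hn : 0 < n) (ha : a < n) (ha' : a' < n)
    (h : s * n + a = s' * n + a') : s = s' ∧ a = a' := by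
  have e1 : (s * n + a) / n = s := by
    rw [mul_comm, Nat.mul_add_div hn, Nat.div_eq_of_lt ha]; ring
  have e2 : (s' * n + a') / n = s' := by
    rw [mul_comm, Nat.mul_add_div hn, Nat.div_eq_of_lt ha']; ring
  have hs : s = s' := by rw [← e1, ← e2, h]
  subst hs
  exact ⟨rfl, Nat.add_left_cancel h⟩

lemma key' {n s s' a a' : ℕ} (hn : 0 < n) (ha1 : 1 ≤ a) (ha : a ≤ n)
    (ha1' : 1 ≤ a') (ha' : a' ≤ n)
    (h : s * n + a = s' * n + a') : s = s' ∧ a = a' := by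
  have h2 : s * n + (a - 1) + 1 = s' * n + (a' - 1) + 1 := by
    rw [add_assoc, add_assoc, Nat.sub_add_cancel ha1, Nat.sub_add_cancel ha1', h]
  have h3 := Nat.add_right_cancel h2
  obtain ⟨hs, hv⟩ := key_div hn (by omega) (by omega) h3
  exact ⟨hs, by omega⟩

/-- The map `φ` is injective on `Π_n`: distinct matrices of
`Π_n` are mapped to distinct binary matrices. -/
theorem phi_injective (n : ℕ) (hn : 0 < n)
    (M M' : Fin (2 * n) → Fin n → ℕ)
    (hM : IsPiMatrix n M) (hM' : IsPiMatrix n M')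
    (hne : M ≠ M') :
    phi n M ≠ phi n M' := by
  intro hphi
  apply hne
  have hbound : ∀ (N : Fin (2 * n) → Fin n → ℕ), IsPiMatrix n N →
      ∀ (i : Fin (2 * n)) (t : Fin n), 1 ≤ N i t ∧ N i t ≤ n := by
    intro N hN i t
    have : N i t ∈ Finset.Icc 1 n := by
      rw [← hN i]; exact Finset.mem_image_of_mem _ (Finset.mem_univ t)
    simpa [Finset.mem_Icc] using this
  have main : ∀ s t : Fin n,
      M (rowT n s) t = M' (rowT n s) t ∧ M (rowB n t) s = M' (rowB n t) s := by
    intro s t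
    obtain ⟨h1, h2⟩ := hbound M hM (rowT n s) t
    obtain ⟨h3, h4⟩ := hbound M hM (rowB n t) s
    have hsn : s.val + 1 ≤ n := s.isLt
    have htn : t.val + 1 ≤ n := t.isLt
    have hi : s.val * n + M (rowT n s) t - 1 < n ^ 2 := by
      have : s.val * n + M (rowT n s) t ≤ n ^ 2 := by nlinarith
      omega
    have hj : t.val * n + M (rowB n t) s - 1 < n ^ 2 := by
      have : t.val * n + M (rowB n t) s ≤ n ^ 2 := by nlinarith
      omega
    set i0 : Fin (n ^ 2) := ⟨s.val * n + M (rowT n s) t - 1, hi⟩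
    set j0 : Fin (n ^ 2) := ⟨t.val * n + M (rowB n t) s - 1, hj⟩
    have hone : phi n M i0 j0 = 1 := by
      unfold phi
      rw [if_pos ⟨s, t, rfl, rfl⟩]
    have hone' : phi n M' i0 j0 = 1 := by rw [← hphi]; exact hone
    have hcond : ∃ s' t' : Fin n,
        (i0 : ℕ) = s'.val * n + M' (rowT n s') t' - 1 ∧
        (j0 : ℕ) = t'.val * n + M' (rowB n t') s' - 1 := by
      by_contra hc
      unfold phi at hone'
      rw [if_neg hc] at hone'
      exact absurd hone' (by norm_num)
    obtain ⟨s', t', hi', hj'⟩ := hcond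
    obtain ⟨h1', h2'⟩ := hbound M' hM' (rowT n s') t'
    obtain ⟨h3', h4'⟩ := hbound M' hM' (rowB n t') s'
    have ei : s.val * n + M (rowT n s) t = s'.val * n + M' (rowT n s') t' := by
      have : s.val * n + M (rowT n s) t - 1 = s'.val * n + M' (rowT n s') t' - 1 := hi'
      omega
    have ej : t.val * n + M (rowB n t) s = t'.val * n + M' (rowB n t') s' := by
      have : t.val * n + M (rowB n t) s - 1 = t'.val * n + M' (rowB n t') s' - 1 := hj'
      omega
    obtain ⟨hs, hv1⟩ := key' hn h1 h2 h1' h2' ei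
    obtain ⟨ht, hv2⟩ := key' hn h3 h4 h3' h4' ej
    have hs2 : s = s' := Fin.ext hs
    have ht2 : t = t' := Fin.ext ht
    subst hs2; subst ht2
    exact ⟨hv1, hv2⟩
  funext i t
  by_cases hi : i.val < n
  · have : i = rowT n ⟨i.val, hi⟩ := Fin.ext rfl
    rw [this]
    exact (main ⟨i.val, hi⟩ t).1
  · have hle : i.val - n < n := by have := i.isLt; omega
    have : i = rowB n ⟨i.val - n, hle⟩ := Fin.ext (by simp [rowB]; omega)
    rw [this]
    exact (main t ⟨i.val - n, hle⟩).2
end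

section
/- The proportion of all binary n²×n² matrices that are S-permutation matrices equals (n!)^{2n} / 2^{n⁴}; equivalently, the number of S-permutation n²×n² matrices divided by the total number 2^{n⁴} of binary n²×n² matrices is (n!)^{2n} / 2^{n⁴}. -/
/-- The index `s*n + k` of the `n² × n²` matrix corresponding to block
coordinate `s` and within-block coordinate `k`. -/
def idx (n : ℕ) (s k : Fin n) : Fin (n ^ 2) :=
  ⟨s.val * n + k.val, by
    have hs := s.isLt
    have hk := k.isLt
    rw [pow_two]
    nlinarith⟩

/-- A matrix is binary if all its entries are `0` or `1`. -/
def Binary01 {α β : Type*} (A : α → β → ℕ) : Prop :=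
  ∀ i j, A i j = 0 ∨ A i j = 1

/-- An S-permutation matrix: a binary `n² × n²` permutation matrix
(exactly one `1` in every row and every column) such that each `n × n`
block contains exactly one entry equal to `1`. -/
def IsSPerm (n : ℕ) (A : Fin (n ^ 2) → Fin (n ^ 2) → ℕ) : Prop :=
  Binary01 A ∧
  (∀ i, ∃! j, A i j = 1) ∧
  (∀ j, ∃! i, A i j = 1) ∧
  (∀ s t : Fin n, ∃! kl : Fin n × Fin n, A (idx n s kl.1) (idx n t kl.2) = 1)

section Aux

variable {n : ℕ}

/-- Block coordinate of an index. -/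
def blk (hn : 0 < n) (i : Fin (n ^ 2)) : Fin n :=
  ⟨i.val / n, Nat.div_lt_of_lt_mul (lt_of_lt_of_eq i.isLt (by ring))⟩

/-- Within-block coordinate of an index. -/
def wpos (hn : 0 < n) (i : Fin (n ^ 2)) : Fin n :=
  ⟨i.val % n, Nat.mod_lt _ hn⟩

lemma blk_idx (hn : 0 < n) (s k : Fin n) : blk hn (idx n s k) = s := by
  apply Fin.ext
  show (s.val * n + k.val) / n = s.val
  rw [mul_comm, Nat.mul_add_div hn, Nat.div_eq_of_lt k.isLt, add_zero]

lemma wpos_idx (hn : 0 < n) (s k : Fin n) : wpos hn (idx n s k) = k := by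
  apply Fin.ext
  show (s.val * n + k.val) % n = k.val
  rw [mul_comm s.val n, Nat.mul_add_mod, Nat.mod_eq_of_lt k.isLt]

lemma idx_blk_wpos (hn : 0 < n) (i : Fin (n ^ 2)) :
    idx n (blk hn i) (wpos hn i) = i := by
  apply Fin.ext
  show i.val / n * n + i.val % n = i.val
  rw [mul_comm]
  exact Nat.div_add_mod _ _

/-- The S-permutation matrix associated to two families of permutations. -/
def Fmat (hn : 0 < n) (p q : Fin n → Equiv.Perm (Fin n))
    (i j : Fin (n ^ 2)) : ℕ :=
  if wpos hn i = p (blk hn i) (blk hn j) ∧ wpos hn j = q (blk hn j) (blk hn i)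
  then 1 else 0

lemma Fmat_eq_one_iff (hn : 0 < n) (p q : Fin n → Equiv.Perm (Fin n))
    (i j : Fin (n ^ 2)) :
    Fmat hn p q i j = 1 ↔
      (wpos hn i = p (blk hn i) (blk hn j) ∧
        wpos hn j = q (blk hn j) (blk hn i)) := by
  unfold Fmat
  split <;> simp_all

lemma isSPerm_Fmat (hn : 0 < n) (p q : Fin n → Equiv.Perm (Fin n)) :
    IsSPerm n (Fmat hn p q) := by
  refine ⟨?_, ?_, ?_, ?_⟩
  · intro i j
    unfold Fmat
    split <;> simp
  · intro i
    set s := blk hn i with hs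
    set t := (p s).symm (wpos hn i) with ht
    refine ⟨idx n t (q t s), ?_, ?_⟩
    · show Fmat hn p q i (idx n t (q t s)) = 1
      rw [Fmat_eq_one_iff, blk_idx, wpos_idx]
      exact ⟨by rw [ht, Equiv.apply_symm_apply], rfl⟩
    · intro j hj
      rw [Fmat_eq_one_iff] at hj
      obtain ⟨h1, h2⟩ := hj
      have hbj : blk hn j = t := by
        rw [ht, h1, Equiv.symm_apply_apply]
      rw [← idx_blk_wpos hn j, hbj, h2, hbj]
  · intro j
    set t := blk hn j with ht
    set s := (q t).symm (wpos hn j) with hs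
    refine ⟨idx n s (p s t), ?_, ?_⟩
    · show Fmat hn p q (idx n s (p s t)) j = 1
      rw [Fmat_eq_one_iff, blk_idx, wpos_idx]
      exact ⟨rfl, by rw [hs, Equiv.apply_symm_apply]⟩
    · intro i hi
      rw [Fmat_eq_one_iff] at hi
      obtain ⟨h1, h2⟩ := hi
      have hbi : blk hn i = s := by
        rw [hs, h2, Equiv.symm_apply_apply]
      rw [← idx_blk_wpos hn i, hbi, h1, hbi]
  · intro s t
    refine ⟨(p s t, q t s), ?_, ?_⟩
    · show Fmat hn p q (idx n s (p s t)) (idx n t (q t s)) = 1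
      rw [Fmat_eq_one_iff, blk_idx, blk_idx, wpos_idx, wpos_idx]
      exact ⟨rfl, rfl⟩
    · intro kl hkl
      rw [Fmat_eq_one_iff, blk_idx, blk_idx, wpos_idx, wpos_idx] at hkl
      exact Prod.ext hkl.1 hkl.2

lemma Fmat_injective (hn : 0 < n) :
    Function.Injective
      (fun pq : (Fin n → Equiv.Perm (Fin n)) × (Fin n → Equiv.Perm (Fin n)) =>
        Fmat hn pq.1 pq.2) := by
  rintro ⟨p, q⟩ ⟨p', q'⟩ h
  have key : ∀ s t : Fin n, p s t = p' s t ∧ q t s = q' t s := by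
    intro s t
    have h1 : Fmat hn p q (idx n s (p s t)) (idx n t (q t s)) = 1 := by
      rw [Fmat_eq_one_iff, blk_idx, blk_idx, wpos_idx, wpos_idx]
      exact ⟨rfl, rfl⟩
    rw [show Fmat hn p q = Fmat hn p' q' from h] at h1
    rw [Fmat_eq_one_iff, blk_idx, blk_idx, wpos_idx, wpos_idx] at h1
    exact h1
  simp only [Prod.mk.injEq]
  constructor
  · funext s; apply Equiv.ext; intro t; exact (key s t).1
  · funext t; apply Equiv.ext; intro s; exact (key s t).2

lemma Fmat_surjective (hn : 0 < n) :
    ∀ A : Fin (n ^ 2) → Fin (n ^ 2) → ℕ, IsSPerm n A →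
      ∃ pq : (Fin n → Equiv.Perm (Fin n)) × (Fin n → Equiv.Perm (Fin n)),
        Fmat hn pq.1 pq.2 = A := by
  intro A hA
  obtain ⟨hbin, hrow, hcol, hblk⟩ := hA
  choose K hK hKu using hblk
  -- row coordinates form permutations
  have hinj1 : ∀ s : Fin n, Function.Injective (fun t => (K s t).1) := by
    intro s t t' h
    simp only at h
    obtain ⟨j, _, hju⟩ := hrow (idx n s (K s t).1)
    have e1 : idx n t (K s t).2 = j := hju _ (hK s t)
    have e2 : idx n t' (K s t').2 = j := by
      apply hju
      rw [h]
      exact hK s t'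
    have := e1.trans e2.symm
    have := congrArg (blk hn) this
    rwa [blk_idx, blk_idx] at this
  have hinj2 : ∀ t : Fin n, Function.Injective (fun s => (K s t).2) := by
    intro t s s' h
    simp only at h
    obtain ⟨i, _, hiu⟩ := hcol (idx n t (K s t).2)
    have e1 : idx n s (K s t).1 = i := hiu _ (hK s t)
    have e2 : idx n s' (K s' t).1 = i := by
      apply hiu
      rw [h]
      exact hK s' t
    have := e1.trans e2.symm
    have := congrArg (blk hn) this
    rwa [blk_idx, blk_idx] at this
  let p : Fin n → Equiv.Perm (Fin n) := fun s =>
    Equiv.ofBijective _ ((Finite.injective_iff_bijective).1 (hinj1 s))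
  let q : Fin n → Equiv.Perm (Fin n) := fun t =>
    Equiv.ofBijective _ ((Finite.injective_iff_bijective).1 (hinj2 t))
  refine ⟨(p, q), ?_⟩
  funext i j
  have hp : ∀ s t, p s t = (K s t).1 := fun _ _ => rfl
  have hq : ∀ t s, q t s = (K s t).2 := fun _ _ => rfl
  set s := blk hn i with hsi
  set t := blk hn j with htj
  by_cases hc : wpos hn i = p s t ∧ wpos hn j = q t s
  · have hF : Fmat hn p q i j = 1 := by
      rw [Fmat_eq_one_iff]; exact hc
    rw [hF]
    have hi : i = idx n s (K s t).1 := by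
      conv_lhs => rw [← idx_blk_wpos hn i]
      rw [← hsi, hc.1, hp]
    have hj : j = idx n t (K s t).2 := by
      conv_lhs => rw [← idx_blk_wpos hn j]
      rw [← htj, hc.2, hq]
    rw [hi, hj]
    exact (hK s t).symm
  · have hF : Fmat hn p q i j = 0 := by
      unfold Fmat
      rw [if_neg]
      exact hc
    rw [hF]
    rcases hbin i j with h0 | h1
    · exact h0.symm
    · exfalso
      have h1' : A (idx n s (wpos hn i)) (idx n t (wpos hn j)) = 1 := by
        rwa [idx_blk_wpos, idx_blk_wpos]
      have := hKu s t (wpos hn i, wpos hn j) h1'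
      apply hc
      constructor
      · rw [hp]; exact congrArg Prod.fst this
      · rw [hq]; exact congrArg Prod.snd this

lemma card_SPerm (n : ℕ) (hn : 0 < n) :
    Nat.card {A : Fin (n ^ 2) → Fin (n ^ 2) → ℕ // IsSPerm n A}
      = (Nat.factorial n) ^ (2 * n) := by
  have hb : Function.Bijective
      (fun pq : (Fin n → Equiv.Perm (Fin n)) × (Fin n → Equiv.Perm (Fin n)) =>
        (⟨Fmat hn pq.1 pq.2, isSPerm_Fmat hn pq.1 pq.2⟩ :
          {A : Fin (n ^ 2) → Fin (n ^ 2) → ℕ // IsSPerm n A})) := by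
    constructor
    · intro x y h
      exact Fmat_injective hn (congrArg Subtype.val h)
    · rintro ⟨A, hA⟩
      obtain ⟨pq, hpq⟩ := Fmat_surjective hn A hA
      exact ⟨pq, Subtype.ext hpq⟩
  rw [← Nat.card_eq_of_bijective _ hb]
  simp only [Nat.card_eq_fintype_card, Fintype.card_prod, Fintype.card_fun,
    Fintype.card_perm, Fintype.card_fin]
  rw [two_mul, pow_add]

end Aux

/-- The proportion of all binary `n² × n²` matrices that are
S-permutation matrices, i.e. the number of S-permutation `n² × n²` matrices
divided by the total number `2^(n⁴)` of binary `n² × n²` matrices, equals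
`(n!)^(2n) / 2^(n⁴)`. -/
theorem proportion_SPerm (n : ℕ) (hn : 0 < n) :
    (Nat.card {A : Fin (n ^ 2) → Fin (n ^ 2) → ℕ // IsSPerm n A} : ℚ) /
        (2 : ℚ) ^ (n ^ 4) =
      ((Nat.factorial n : ℚ)) ^ (2 * n) / (2 : ℚ) ^ (n ^ 4) := by
  rw [card_SPerm n hn]
  push_cast
  ring
end
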